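/- There exists a universal constant C > 0 such that the following holds. Let Σ be a finite set, P a pmf on Σ×Σ, fix (x,y) ∈ Σ×Σ, and let P̂ be the empirical distribution of N > 1 i.i.d. samples from P. For every δ ∈ (0,1), if Δ_{xy} = 0, then with probability greater than 1−3δ one has f(Δ̂_{xy}, P̂_X(x)P̂_Y(y)) < C·(log N / N)·log(2/δ). -/

import Mathlib

/-!
Each of P̂(x,y), P̂_X(x), P̂_Y(y) is the empirical frequency of an event, so by a Chernoff bound
it lies, with probability at least `1 - δ/2`, within the Bernstein radius `2√(θa) + 2a` of its mean
`θ`, where `a = log(4/δ)/N`. On the intersection of the three events the bound is deterministic.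
If a true marginal is below `64a`, the empirical marginal is `O(a)`; since
`f(r - b, b) = r log(r/b) - r + b ≤ r log N + b` whenever `r² ≤ b` and `r ∈ {0} ∪ [1/N, 1]`,
`f` is then `O(a log N)`, and the same holds when `P(x,y) < a`. Otherwise both empirical
marginals are within a factor 2 of the true ones, independence makes `|Δ̂| = O(√(P(x,y) a))`, and
`f(Δ̂, b) ≤ Δ̂²/b = O(a)`.
-/

open scoped Classical

noncomputable section

/-- `f(a,b) := (a+b)·log(1+a/b) − a` (natural logarithm). -/
def f (a b : ℝ) : ℝ := (a + b) * Real.log (1 + a / b) - a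

/-- Probability of an event under a (finitely supported) density `p`. -/
def prob {Ω : Type*} [Fintype Ω] (p : Ω → ℝ) (E : Set Ω) : ℝ :=
  ∑ ω, if ω ∈ E then p ω else 0

/-- Empirical probability of `a` among the `N` samples `s`. -/
def emp {α : Type*} (N : ℕ) (s : Fin N → α) (a : α) : ℝ :=
  ((Finset.univ.filter (fun j => s j = a)).card : ℝ) / N

section Prob

variable {Ω : Type*} [Fintype Ω] {p : Ω → ℝ}

lemma prob_nonneg (hp : ∀ ω, 0 ≤ p ω) (E : Set Ω) : 0 ≤ prob p E :=
  Finset.sum_nonneg fun ω _ => by split_ifs <;> simp [hp ω]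

lemma prob_mono (hp : ∀ ω, 0 ≤ p ω) {E F : Set Ω} (h : E ⊆ F) : prob p E ≤ prob p F :=
  Finset.sum_le_sum fun ω _ => by
    by_cases hE : ω ∈ E
    · simp [hE, h hE]
    · by_cases hF : ω ∈ F <;> simp [hE, hF, hp ω]

lemma prob_univ : prob p Set.univ = ∑ ω, p ω := by
  simp [prob]

lemma prob_le_one (hp : ∀ ω, 0 ≤ p ω) (htot : ∑ ω, p ω = 1) (E : Set Ω) : prob p E ≤ 1 :=
  htot ▸ prob_univ (p := p) ▸ prob_mono hp (Set.subset_univ E)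

lemma prob_union_le (hp : ∀ ω, 0 ≤ p ω) (E F : Set Ω) :
    prob p (E ∪ F) ≤ prob p E + prob p F := by
  rw [prob, prob, prob, ← Finset.sum_add_distrib]
  refine Finset.sum_le_sum fun ω _ => ?_
  by_cases hE : ω ∈ E <;> by_cases hF : ω ∈ F <;> simp [hE, hF, hp ω]

lemma prob_compl (htot : ∑ ω, p ω = 1) (E : Set Ω) : prob p Eᶜ = 1 - prob p E := by
  rw [eq_sub_iff_add_eq, prob, prob, ← Finset.sum_add_distrib, ← htot]
  refine Finset.sum_congr rfl fun ω _ => ?_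
  by_cases hE : ω ∈ E <;> simp [hE]

lemma prob_add_prob_sub_one_le_prob_inter (hp : ∀ ω, 0 ≤ p ω) (htot : ∑ ω, p ω = 1)
    (E F : Set Ω) : prob p E + prob p F - 1 ≤ prob p (E ∩ F) := by
  have := prob_union_le hp Eᶜ Fᶜ
  rw [← Set.compl_inter, prob_compl htot, prob_compl htot, prob_compl htot] at this
  linarith

lemma one_sub_three_mul_le_prob_inter_inter (hp : ∀ ω, 0 ≤ p ω) (htot : ∑ ω, p ω = 1)
    {ε : ℝ} {E F G : Set Ω} (hE : 1 - ε ≤ prob p E) (hF : 1 - ε ≤ prob p F)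
    (hG : 1 - ε ≤ prob p G) : 1 - 3 * ε ≤ prob p (E ∩ F ∩ G) := by
  linarith [prob_add_prob_sub_one_le_prob_inter hp htot E F,
    prob_add_prob_sub_one_le_prob_inter hp htot (E ∩ F) G]

lemma prob_singleton (a : Ω) : prob p {a} = p a := by
  simp [prob]

lemma prob_fst_preimage {α β : Type*} [Fintype α] [Fintype β] (p : α × β → ℝ) (x : α) :
    prob p (Prod.fst ⁻¹' {x}) = ∑ y, p (x, y) := by
  rw [prob, Fintype.sum_prod_type, Fintype.sum_eq_single x fun a ha => by simp [ha]]
  simp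

lemma prob_snd_preimage {α β : Type*} [Fintype α] [Fintype β] (p : α × β → ℝ) (y : β) :
    prob p (Prod.snd ⁻¹' {y}) = ∑ x, p (x, y) := by
  simp [prob, Fintype.sum_prod_type]

end Prob

section Empirical

variable {α : Type*} {N : ℕ} (s : Fin N → α)

lemma emp_nonneg (a : α) : 0 ≤ emp N s a := by
  unfold emp; positivity

lemma emp_eq_zero_or_inv_le (a : α) : emp N s a = 0 ∨ (N : ℝ)⁻¹ ≤ emp N s a := by
  unfold emp
  rcases Nat.eq_zero_or_pos (Finset.univ.filter fun j => s j = a).card with h | h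
  · simp [h]
  · exact Or.inr (by rw [inv_eq_one_div]; gcongr; exact_mod_cast h)

lemma prob_emp [Fintype α] (A : Set α) :
    prob (emp N s) A = (∑ j, if s j ∈ A then 1 else 0) / N := by
  have h (a : α) : (if a ∈ A then emp N s a else 0)
      = (∑ j, if s j = a then (if a ∈ A then 1 else 0) else 0) / N := by
    by_cases ha : a ∈ A <;> simp [ha, emp, -Finset.sum_boole, Finset.natCast_card_filter]
  simp only [prob, h, ← Finset.sum_div]
  rw [Finset.sum_comm]
  simp

lemma sum_emp [Fintype α] (hN : 0 < N) : ∑ a, emp N s a = 1 := by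
  rw [← prob_univ, prob_emp]
  simp [hN.ne']

end Empirical

def bernsteinRadius (θ a : ℝ) : ℝ := 2 * √(θ * a) + 2 * a

def BernsteinClose {β : Type*} [Fintype β] {N : ℕ} (P : β → ℝ) (a : ℝ) (s : Fin N → β)
    (A : Set β) : Prop :=
  |prob (emp N s) A - prob P A| ≤ bernsteinRadius (prob P A) a

section Concentration

open Real

variable {β : Type*} [Fintype β] {P : β → ℝ}

lemma prob_le_exp_neg_mul_mgf_pow (hP : ∀ b, 0 ≤ P b) (N : ℕ) (X : β → ℝ) (c : ℝ) :
    prob (fun s : Fin N → β => ∏ j, P (s j)) {s | c ≤ ∑ j, X (s j)}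
      ≤ exp (-c) * (∑ b, P b * exp (X b)) ^ N := by
  rw [Fintype.sum_pow, Finset.mul_sum, prob]
  refine Finset.sum_le_sum fun s _ => ?_
  have hprod : 0 ≤ ∏ j, P (s j) := Finset.prod_nonneg fun j _ => hP _
  rw [Finset.prod_mul_distrib, ← exp_sum, ← mul_assoc, mul_comm (exp _), mul_assoc, ← exp_add]
  split_ifs with hs
  · exact le_mul_of_one_le_right hprod (one_le_exp (by linarith [show c ≤ ∑ j, X (s j) from hs]))
  · positivity

lemma sum_mul_exp_indicator (htot : ∑ b, P b = 1) (A : Set β) (t : ℝ) :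
    ∑ b, P b * exp (t * if b ∈ A then 1 else 0) = 1 + prob P A * (exp t - 1) := by
  have h (b : β) : P b * exp (t * if b ∈ A then 1 else 0)
      = P b + (if b ∈ A then P b else 0) * (exp t - 1) := by
    by_cases hb : b ∈ A <;> simp [hb]; ring
  rw [Finset.sum_congr rfl fun b _ => h b, Finset.sum_add_distrib, htot, prob, Finset.sum_mul]

lemma prob_le_exp_chernoff (hP : ∀ b, 0 ≤ P b) (htot : ∑ b, P b = 1) (N : ℕ) (A : Set β)
    (t c : ℝ) :
    prob (fun s : Fin N → β => ∏ j, P (s j)) {s | c ≤ t * ∑ j, if s j ∈ A then 1 else 0}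
      ≤ exp (N * (prob P A * (exp t - 1)) - c) := by
  have hmgf := sum_mul_exp_indicator htot A t
  have h1 : 0 ≤ 1 + prob P A * (exp t - 1) := by
    rw [← hmgf]; exact Finset.sum_nonneg fun b _ => mul_nonneg (hP b) (exp_nonneg _)
  simp_rw [Finset.mul_sum]
  calc _ ≤ exp (-c) * (1 + prob P A * (exp t - 1)) ^ N := by
        rw [← hmgf]
        exact prob_le_exp_neg_mul_mgf_pow hP N (fun b => t * if b ∈ A then 1 else 0) c
    _ ≤ exp (-c) * exp (prob P A * (exp t - 1)) ^ N := by
        gcongr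
        linarith [add_one_le_exp (prob P A * (exp t - 1))]
    _ = _ := by rw [← exp_nat_mul, ← exp_add]; ring_nf

lemma sum_prod_eq_one (htot : ∑ b, P b = 1) (N : ℕ) : ∑ s : Fin N → β, ∏ j, P (s j) = 1 := by
  rw [← Fintype.sum_pow, htot, one_pow]

lemma exists_mul_sq_sub_mul_bernsteinRadius_le {θ a : ℝ} (ha : 0 < a) :
    ∃ t, 0 ≤ t ∧ t ≤ 1 ∧ θ * t ^ 2 - t * bernsteinRadius θ a ≤ -a := by
  unfold bernsteinRadius
  rcases le_or_gt θ a with h | h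
  · exact ⟨1, zero_le_one, le_rfl, by nlinarith [sqrt_nonneg (θ * a)]⟩
  · have hθ0 : 0 < θ := ha.trans h
    refine ⟨√(a / θ), sqrt_nonneg _, sqrt_le_one.mpr ((div_le_one hθ0).2 h.le), ?_⟩
    have h1 : θ * √(a / θ) ^ 2 = a := by rw [sq_sqrt (by positivity)]; field_simp
    have h2 : √(a / θ) * √(θ * a) = a := by
      rw [← sqrt_mul (by positivity), show a / θ * (θ * a) = a ^ 2 by field_simp]
      exact sqrt_sq ha.le
    nlinarith [sqrt_nonneg (a / θ)]

lemma prob_upper_tail_le (hP : ∀ b, 0 ≤ P b) (htot : ∑ b, P b = 1) (A : Set β) {N : ℕ}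
    (hN : 0 < N) (r : ℝ) {t : ℝ} (ht0 : 0 ≤ t) (ht1 : t ≤ 1) :
    prob (fun s : Fin N → β => ∏ j, P (s j)) {s | prob P A + r ≤ prob (emp N s) A}
      ≤ exp (N * (prob P A * t ^ 2 - t * r)) := by
  have hN' : (0 : ℝ) < N := by exact_mod_cast hN
  have hsub : {s : Fin N → β | prob P A + r ≤ prob (emp N s) A}
      ⊆ {s | t * (N * (prob P A + r)) ≤ t * ∑ j, if s j ∈ A then 1 else 0} := fun s hs =>
    mul_le_mul_of_nonneg_left ((le_div_iff₀' hN').1 (prob_emp s A ▸ hs)) ht0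
  refine (prob_mono (fun s => Finset.prod_nonneg fun j _ => hP _) hsub).trans
    ((prob_le_exp_chernoff hP htot N A t _).trans (exp_le_exp.2 ?_))
  have hexp := (abs_le.1 (abs_exp_sub_one_sub_id_le (abs_le.2 ⟨by linarith, ht1⟩))).2
  nlinarith [mul_le_mul_of_nonneg_left hexp (mul_nonneg hN'.le (prob_nonneg hP A))]

lemma prob_lower_tail_le (hP : ∀ b, 0 ≤ P b) (htot : ∑ b, P b = 1) (A : Set β) {N : ℕ}
    (hN : 0 < N) (r : ℝ) {t : ℝ} (ht0 : 0 ≤ t) (ht1 : t ≤ 1) :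
    prob (fun s : Fin N → β => ∏ j, P (s j)) {s | prob (emp N s) A ≤ prob P A - r}
      ≤ exp (N * (prob P A * t ^ 2 - t * r)) := by
  have hN' : (0 : ℝ) < N := by exact_mod_cast hN
  have hsub : {s : Fin N → β | prob (emp N s) A ≤ prob P A - r}
      ⊆ {s | -t * (N * (prob P A - r)) ≤ -t * ∑ j, if s j ∈ A then 1 else 0} := fun s hs =>
    mul_le_mul_of_nonpos_left ((div_le_iff₀' hN').1 (prob_emp s A ▸ hs)) (by linarith)
  refine (prob_mono (fun s => Finset.prod_nonneg fun j _ => hP _) hsub).trans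
    ((prob_le_exp_chernoff hP htot N A (-t) _).trans (exp_le_exp.2 ?_))
  have ht : |-t| ≤ 1 := by rw [abs_neg, abs_le]; constructor <;> linarith
  have hexp := (abs_le.1 (abs_exp_sub_one_sub_id_le ht)).2
  nlinarith [mul_le_mul_of_nonneg_left hexp (mul_nonneg hN'.le (prob_nonneg hP A))]

theorem one_sub_two_mul_exp_le_prob_bernsteinClose (hP : ∀ b, 0 ≤ P b) (htot : ∑ b, P b = 1)
    (A : Set β) {N : ℕ} (hN : 0 < N) {M : ℝ} (hM : 0 < M) :
    1 - 2 * exp (-M) ≤ prob (fun s : Fin N → β => ∏ j, P (s j))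
      {s | BernsteinClose P (M / N) s A} := by
  have hN' : (0 : ℝ) < N := by exact_mod_cast hN
  set r := bernsteinRadius (prob P A) (M / N)
  obtain ⟨t, ht0, ht1, ht⟩ :=
    exists_mul_sq_sub_mul_bernsteinRadius_le (θ := prob P A) (div_pos hM hN')
  have hexp : exp (N * (prob P A * t ^ 2 - t * r)) ≤ exp (-M) := by
    refine exp_le_exp.2 ((mul_le_mul_of_nonneg_left ht hN'.le).trans_eq ?_)
    field_simp
  have hsub : {s : Fin N → β | BernsteinClose P (M / N) s A}ᶜ
      ⊆ {s | prob P A + r ≤ prob (emp N s) A} ∪ {s | prob (emp N s) A ≤ prob P A - r} := by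
    intro s hs
    rcases lt_abs.1 (not_le.1 hs : r < |prob (emp N s) A - prob P A|) with h | h
    · exact Or.inl (show prob P A + r ≤ _ by linarith)
    · exact Or.inr (show _ ≤ prob P A - r by linarith)
  have hw : ∀ s : Fin N → β, 0 ≤ ∏ j, P (s j) := fun s => Finset.prod_nonneg fun j _ => hP _
  have := (prob_mono hw hsub).trans (prob_union_le hw _ _)
  rw [prob_compl (sum_prod_eq_one htot N)] at this
  linarith [prob_upper_tail_le hP htot A hN r ht0 ht1, prob_lower_tail_le hP htot A hN r ht0 ht1]

end Concentration

section Divergence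

open Real

lemma f_le_sq_div {a b : ℝ} (hb : 0 < b) (hab : -b ≤ a) : f a b ≤ a ^ 2 / b := by
  have hlog : (a + b) * log (1 + a / b) ≤ (a + b) * (a / b) := by
    rcases hab.eq_or_lt with h | h
    · simp [← h]
    · refine mul_le_mul_of_nonneg_left ?_ (by linarith)
      have : -1 < a / b := by rw [lt_div_iff₀ hb]; linarith
      linarith [log_le_sub_one_of_pos (by linarith : 0 < 1 + a / b)]
  have : (a + b) * (a / b) - a = a ^ 2 / b := by field_simp; ring
  unfold f; linarith

lemma f_sub_le_mul_log {r b n : ℝ} (hn : 0 < n) (hr : 0 ≤ r) (hrb : r ^ 2 ≤ b)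
    (hrn : r = 0 ∨ n⁻¹ ≤ r) : f (r - b) b ≤ r * log n + b := by
  rcases hrn with rfl | hrn
  · simp [f]
  · have hr0 : 0 < r := (inv_pos.2 hn).trans_le hrn
    have hb : 0 < b := (pow_pos hr0 2).trans_le hrb
    have hnr : 1 ≤ r * n := (inv_le_iff_one_le_mul₀ hn).1 hrn
    have hlog : log (r / b) ≤ log n :=
      log_le_log (div_pos hr0 hb) ((div_le_iff₀ hb).2 (by nlinarith))
    have harg : 1 + (r - b) / b = r / b := by field_simp; ring
    rw [f, harg, sub_add_cancel]
    nlinarith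

lemma one_half_le_log {n : ℝ} (hn : 2 ≤ n) : 1 / 2 ≤ log n :=
  le_trans (by linarith [log_two_gt_d9]) (log_le_log two_pos hn)

lemma f_sub_le_three_mul_log {r b c n : ℝ} (hn : 2 ≤ n) (hr : 0 ≤ r) (hrb : r ^ 2 ≤ b)
    (hrn : r = 0 ∨ n⁻¹ ≤ r) (hrc : r ≤ c) (hbc : b ≤ c) : f (r - b) b ≤ 3 * c * log n := by
  have := f_sub_le_mul_log (by linarith) hr hrb hrn
  have := one_half_le_log hn
  nlinarith

lemma abs_sub_le_half_of_bernsteinRadius {p θ a : ℝ} (ha : 0 ≤ a) (hθ : 64 * a ≤ θ)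
    (h : |p - θ| ≤ bernsteinRadius θ a) : |p - θ| ≤ θ / 2 := by
  have : √(θ * a) ≤ θ / 8 := (sqrt_le_left (by linarith)).2 (by nlinarith)
  unfold bernsteinRadius at h; linarith

lemma mul_sqrt_le_sqrt_mul {c : ℝ} (hc0 : 0 ≤ c) (hc1 : c ≤ 1) (x : ℝ) :
    c * √x ≤ √(c * x) := by
  rw [sqrt_mul hc0]
  gcongr
  exact (le_sqrt hc0 hc0).2 (by nlinarith)

lemma abs_mul_sub_mul_le {p q p0 q0 a : ℝ} (ha : 0 ≤ a) (hp0 : 0 ≤ p0) (hp01 : p0 ≤ 1)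
    (hq0 : 0 ≤ q0) (hq01 : q0 ≤ 1) (hq0a : 64 * a ≤ q0)
    (dp : |p - p0| ≤ bernsteinRadius p0 a) (dq : |q - q0| ≤ bernsteinRadius q0 a) :
    |p * q - p0 * q0| ≤ 5 * √(p0 * q0 * a) + 5 * a := by
  have hq : |q - q0| ≤ q0 / 2 := abs_sub_le_half_of_bernsteinRadius ha hq0a dq
  have hq' : 0 ≤ q := by linarith [(abs_le.1 hq).1]
  have h1 : q0 * √(p0 * a) ≤ √(p0 * q0 * a) :=
    (mul_sqrt_le_sqrt_mul hq0 hq01 (p0 * a)).trans_eq (by ring_nf)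
  have h2 : p0 * √(q0 * a) ≤ √(p0 * q0 * a) :=
    (mul_sqrt_le_sqrt_mul hp0 hp01 (q0 * a)).trans_eq (by ring_nf)
  have e1 : |(p - p0) * q| ≤ bernsteinRadius p0 a * (3 / 2 * q0) := by
    rw [abs_mul, abs_of_nonneg hq']
    exact mul_le_mul dp (by linarith [(abs_le.1 hq).2]) hq' (by unfold bernsteinRadius; positivity)
  have e2 : |p0 * (q - q0)| ≤ p0 * bernsteinRadius q0 a := by
    rw [abs_mul, abs_of_nonneg hp0]
    exact mul_le_mul_of_nonneg_left dq hp0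
  unfold bernsteinRadius at e1 e2
  calc |p * q - p0 * q0| = |(p - p0) * q + p0 * (q - q0)| := by ring_nf
    _ ≤ |(p - p0) * q| + |p0 * (q - q0)| := abs_add_le _ _
    _ ≤ 5 * √(p0 * q0 * a) + 5 * a := by nlinarith

lemma f_sub_mul_le_of_large_marginals {r p q p0 q0 a : ℝ} (ha : 0 < a) (hp0 : 0 ≤ p0)
    (hp01 : p0 ≤ 1) (hq0 : 0 ≤ q0) (hq01 : q0 ≤ 1) (hp0a : 64 * a ≤ p0) (hq0a : 64 * a ≤ q0)
    (hu : a ≤ p0 * q0) (hr : 0 ≤ r)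
    (dr : |r - p0 * q0| ≤ bernsteinRadius (p0 * q0) a)
    (dp : |p - p0| ≤ bernsteinRadius p0 a) (dq : |q - q0| ≤ bernsteinRadius q0 a) :
    f (r - p * q) (p * q) ≤ 784 * a := by
  have hp := abs_le.1 (abs_sub_le_half_of_bernsteinRadius ha.le hp0a dp)
  have hq := abs_le.1 (abs_sub_le_half_of_bernsteinRadius ha.le hq0a dq)
  have hpq : p0 * q0 / 4 ≤ p * q := by nlinarith
  have hpq0 : 0 < p * q := by nlinarith
  have has : a ≤ √(p0 * q0 * a) := (le_sqrt ha.le (by positivity)).2 (by nlinarith)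
  have hdev : |r - p * q| ≤ 14 * √(p0 * q0 * a) := by
    have := abs_mul_sub_mul_le ha.le hp0 hp01 hq0 hq01 hq0a dp dq
    unfold bernsteinRadius at dr
    calc |r - p * q| ≤ |r - p0 * q0| + |p * q - p0 * q0| := by
          simpa [abs_sub_comm (p0 * q0)] using abs_sub_le r (p0 * q0) (p * q)
      _ ≤ 14 * √(p0 * q0 * a) := by linarith
  have hsq : (r - p * q) ^ 2 ≤ 196 * (p0 * q0 * a) := by
    calc (r - p * q) ^ 2 = |r - p * q| ^ 2 := (sq_abs _).symm
      _ ≤ (14 * √(p0 * q0 * a)) ^ 2 := by gcongr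
      _ = 196 * (p0 * q0 * a) := by rw [mul_pow, sq_sqrt (by positivity)]; norm_num
  refine (f_le_sq_div hpq0 (by linarith)).trans ((div_le_iff₀ hpq0).2 ?_)
  nlinarith

theorem f_sub_mul_le_mul_log {n a r p q p0 q0 : ℝ} (hn : 2 ≤ n) (ha : 0 < a) (hp0 : 0 ≤ p0)
    (hp01 : p0 ≤ 1) (hq0 : 0 ≤ q0) (hq01 : q0 ≤ 1) (hr : 0 ≤ r) (hrp : r ≤ p) (hrq : r ≤ q)
    (hp1 : p ≤ 1) (hq1 : q ≤ 1) (hrn : r = 0 ∨ n⁻¹ ≤ r)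
    (dr : |r - p0 * q0| ≤ bernsteinRadius (p0 * q0) a)
    (dp : |p - p0| ≤ bernsteinRadius p0 a) (dq : |q - q0| ≤ bernsteinRadius q0 a) :
    f (r - p * q) (p * q) ≤ 1600 * a * log n := by
  have hlog := one_half_le_log hn
  have hpq : r ^ 2 ≤ p * q := by nlinarith
  have small (c : ℝ) : r ≤ c → p * q ≤ c → f (r - p * q) (p * q) ≤ 3 * c * log n :=
    f_sub_le_three_mul_log hn hr hpq hrn
  unfold bernsteinRadius at dr dp dq
  rcases lt_or_ge p0 (64 * a) with hp0a | hp0a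
  · have : √(p0 * a) ≤ 8 * a := (sqrt_le_left (by linarith)).2 (by nlinarith)
    have hp : p ≤ 82 * a := by linarith [(abs_le.1 dp).2]
    have := small (82 * a) (by linarith) (by nlinarith)
    nlinarith
  rcases lt_or_ge q0 (64 * a) with hq0a | hq0a
  · have : √(q0 * a) ≤ 8 * a := (sqrt_le_left (by linarith)).2 (by nlinarith)
    have hq : q ≤ 82 * a := by linarith [(abs_le.1 dq).2]
    have := small (82 * a) (by linarith) (by nlinarith)
    nlinarith
  rcases lt_or_ge (p0 * q0) a with hu | hu
  · have : √(p0 * q0 * a) ≤ a := (sqrt_le_left ha.le).2 (by nlinarith)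
    have hp := abs_le.1 (abs_sub_le_half_of_bernsteinRadius ha.le hp0a dp)
    have hq := abs_le.1 (abs_sub_le_half_of_bernsteinRadius ha.le hq0a dq)
    have := small (5 * a) (by linarith [(abs_le.1 dr).2]) (by nlinarith)
    nlinarith
  · have := f_sub_mul_le_of_large_marginals ha hp0 hp01 hq0 hq01 hp0a hq0a hu hr dr dp dq
    nlinarith

end Divergence

lemma log_four_div_le_two_mul_log_two_div {δ : ℝ} (hδ0 : 0 < δ) (hδ1 : δ ≤ 1) :
    Real.log (4 / δ) ≤ 2 * Real.log (2 / δ) := by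
  rw [← Real.log_rpow (by positivity), Real.rpow_two]
  refine Real.log_le_log (by positivity) ?_
  rw [div_pow, div_le_div_iff₀ hδ0 (by positivity)]
  nlinarith

theorem f_emp_le_mul_log {α : Type*} [Fintype α] {P : α × α → ℝ} (hP : ∀ z, 0 ≤ P z)
    (htot : ∑ z, P z = 1) {x y : α} (hxy : P (x, y) = (∑ y', P (x, y')) * ∑ x', P (x', y))
    {N : ℕ} (hN : 2 ≤ N) (s : Fin N → α × α) {a : ℝ} (ha : 0 < a)
    (dr : BernsteinClose P a s {(x, y)}) (dp : BernsteinClose P a s (Prod.fst ⁻¹' {x}))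
    (dq : BernsteinClose P a s (Prod.snd ⁻¹' {y})) :
    f (emp N s (x, y) - (∑ y', emp N s (x, y')) * (∑ x', emp N s (x', y)))
        ((∑ y', emp N s (x, y')) * (∑ x', emp N s (x', y))) ≤ 1600 * a * Real.log N := by
  have he := emp_nonneg s
  have he1 := sum_emp s (by omega)
  have hrp := prob_mono he (show {(x, y)} ⊆ Prod.fst ⁻¹' {x} by simp)
  have hrq := prob_mono he (show {(x, y)} ⊆ Prod.snd ⁻¹' {y} by simp)
  have hp1 := prob_le_one he he1 (Prod.fst ⁻¹' {x})
  have hq1 := prob_le_one he he1 (Prod.snd ⁻¹' {y})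
  have hp0 := prob_nonneg hP (Prod.fst ⁻¹' {x})
  have hq0 := prob_nonneg hP (Prod.snd ⁻¹' {y})
  have hp01 := prob_le_one hP htot (Prod.fst ⁻¹' {x})
  have hq01 := prob_le_one hP htot (Prod.snd ⁻¹' {y})
  unfold BernsteinClose at dr dp dq
  simp only [prob_singleton, prob_fst_preimage, prob_snd_preimage] at *
  rw [hxy] at dr
  exact f_sub_mul_le_mul_log (by exact_mod_cast hN) ha hp0 hp01 hq0 hq01 (he _) hrp hrq hp1 hq1
    (emp_eq_zero_or_inv_le s _) dr dp dq

/-- Soundness (Lemma 4.7): if `Δ_{xy} = 0` then the empirical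
`f(Δ̂_{xy}, P̂_X(x)P̂_Y(y))` is small, with probability `> 1 − 3δ`. -/
theorem stmt10 :
    ∃ C : ℝ, 0 < C ∧
      ∀ (α : Type) [Fintype α], ∀ P : α × α → ℝ,
        (∀ z, 0 ≤ P z) → (∑ z, P z = 1) →
        ∀ (x y : α) (N : ℕ), 1 < N →
        ∀ δ : ℝ, δ ∈ Set.Ioo (0 : ℝ) 1 →
        P (x, y) - (∑ y', P (x, y')) * (∑ x', P (x', y)) = 0 →
        1 - 3 * δ <
          prob (fun s : Fin N → α × α => ∏ j, P (s j))
            {s |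
              f (emp N s (x, y) - (∑ y', emp N s (x, y')) * (∑ x', emp N s (x', y)))
                  ((∑ y', emp N s (x, y')) * (∑ x', emp N s (x', y))) <
                C * (Real.log N / N) * Real.log (2 / δ)} := by
  refine ⟨4000, by norm_num, ?_⟩
  intro α _ P hP htot x y N hN δ ⟨hδ0, hδ1⟩ hxy
  have hN0 : (0 : ℝ) < N := by exact_mod_cast (by omega : 0 < N)
  set L := Real.log (2 / δ)
  set M := Real.log (4 / δ)
  have hL : 0 < L := Real.log_pos (by rw [lt_div_iff₀ hδ0]; linarith)
  have hM : 0 < M := Real.log_pos (by rw [lt_div_iff₀ hδ0]; linarith)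
  have hML : M ≤ 2 * L := log_four_div_le_two_mul_log_two_div hδ0 hδ1.le
  have hexpM : Real.exp (-M) = δ / 4 := by
    rw [Real.exp_neg, Real.exp_log (by positivity), inv_div]
  set E : Set (α × α) → Set (Fin N → α × α) := fun A => {s | BernsteinClose P (M / N) s A}
  have hE (A : Set (α × α)) : 1 - δ / 2 ≤ prob (fun s : Fin N → α × α => ∏ j, P (s j)) (E A) := by
    have := one_sub_two_mul_exp_le_prob_bernsteinClose hP htot A (by omega : 0 < N) hM
    rw [hexpM] at this
    linarith
  have hsub : E {(x, y)} ∩ E (Prod.fst ⁻¹' {x}) ∩ E (Prod.snd ⁻¹' {y}) ⊆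
      {s | f (emp N s (x, y) - (∑ y', emp N s (x, y')) * (∑ x', emp N s (x', y)))
          ((∑ y', emp N s (x, y')) * (∑ x', emp N s (x', y))) <
        4000 * (Real.log N / N) * L} := by
    rintro s ⟨⟨dr, dp⟩, dq⟩
    have hK : 0 < Real.log N / N * L := by
      have := Real.log_pos (by exact_mod_cast hN : (1 : ℝ) < N)
      positivity
    calc _ ≤ 1600 * (M / N) * Real.log N :=
          f_emp_le_mul_log hP htot (by linarith) hN s (div_pos hM hN0) dr dp dq
      _ = 1600 * M * (Real.log N / N) := by ring
      _ < 4000 * (Real.log N / N) * L := by nlinarith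
  have hw (s : Fin N → α × α) : 0 ≤ ∏ j, P (s j) := Finset.prod_nonneg fun j _ => hP _
  calc 1 - 3 * δ < 1 - 3 * (δ / 2) := by linarith
    _ ≤ _ := one_sub_three_mul_le_prob_inter_inter hw (sum_prod_eq_one htot N) (hE _) (hE _) (hE _)
    _ ≤ _ := prob_mono hw hsub

end
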